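/- Let G be a tree (a connected acyclic finite simple graph) on 2n vertices (n ≥ 2) that is unmixed and has a bipartition (V, W) with |V| = |W| = n for which there exist maximal independent sets F_0 = V, F_1, …, F_n = W of G with |F_i ∩ F_{i+1}| = n − 1 for every i. Then G has precisely n vertices of degree one. -/

import Mathlib

/-- A set of vertices is independent if no two of its elements are adjacent. -/
def IndepSet {α : Type*} (G : SimpleGraph α) (S : Finset α) : Prop :=
  ∀ ⦃u⦄, u ∈ S → ∀ ⦃v⦄, v ∈ S → ¬ G.Adj u v

/-- A maximal independent set: an independent set not properly contained in any
other independent set. -/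
def MaxIndepSet {α : Type*} (G : SimpleGraph α) (S : Finset α) : Prop :=
  IndepSet G S ∧ ∀ ⦃T : Finset α⦄, IndepSet G T → S ⊆ T → T = S

/-- `G` is unmixed if all maximal independent sets have the same cardinality. -/
def Unmixed {α : Type*} (G : SimpleGraph α) : Prop :=
  ∀ ⦃S T : Finset α⦄, MaxIndepSet G S → MaxIndepSet G T → S.card = T.card

/-- `(V, W)` is a bipartition of `G`: the vertex set is the disjoint union of `V` and `W`
and every edge joins a vertex of `V` to a vertex of `W`. -/
def IsBipartition {α : Type*} [Fintype α] [DecidableEq α]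
    (G : SimpleGraph α) (V W : Finset α) : Prop :=
  Disjoint V W ∧ V ∪ W = Finset.univ ∧
    ∀ ⦃u v⦄, G.Adj u v → (u ∈ V ∧ v ∈ W) ∨ (u ∈ W ∧ v ∈ V)

/-!
Consecutive sets of the chain differ by swapping one vertex `x ∈ Fᵢ` for one vertex `y ∈ Fᵢ₊₁`,
and maximality of `Fᵢ` forces `x ~ y`. Every vertex changes membership somewhere between `F₀ = V`
and `Fₙ = W`, so these `n` edges cover all `2n` vertices. An independent set meets each of them at
most once, so by unmixedness no maximal independent set avoids one of them. If neither end of the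
edge `xy` were a leaf, further neighbours `p ~ x` and `q ~ y` would be non-adjacent (a tree has no
`4`-cycle), and `{p, q}` would extend to a maximal independent set avoiding `x` and `y`. If both
ends were leaves, `xy` would be the whole tree, contradicting `n ≥ 2`. Hence each of the `n` edges
has exactly one leaf.
-/

open Finset
open scoped symmDiff

section

variable {α : Type*} {G : SimpleGraph α}

namespace SimpleGraph

variable {x y : α}

lemma exists_adj_ne_of_degree_ne_one [Fintype (G.neighborSet x)] (hxy : G.Adj x y)
    (hx : G.degree x ≠ 1) : ∃ p, G.Adj x p ∧ p ≠ y := by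
  by_contra! h
  exact hx (degree_eq_one_iff_existsUnique_adj.2 ⟨y, hxy, h⟩)

lemma IsAcyclic.not_adj_of_adj_of_adj {p q : α} (hG : G.IsAcyclic) (hxy : G.Adj x y)
    (hxp : G.Adj x p) (hyq : G.Adj y q) (hpy : p ≠ y) (hqx : q ≠ x) : ¬G.Adj p q := by
  intro hpq
  -- the walk `x p q y` would avoid the bridge `xy`
  refine isBridge_iff.1 (isAcyclic_iff_forall_adj_isBridge.1 hG hxy) ?_
  have hadj : ∀ {u w}, G.Adj u w → s(u, w) ≠ s(x, y) → (G.deleteEdges {s(x, y)}).Adj u w :=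
    fun huw hne => (deleteEdges_adj ..).2 ⟨huw, hne⟩
  refine ((hadj hxp ?_).reachable.trans (hadj hpq ?_).reachable).trans (hadj hyq.symm ?_).reachable
  · simp [hpy, hxy.ne]
  · simp [hpy, hxp.ne.symm]
  · simp [hqx, hxy.ne.symm]

lemma Preconnected.eq_or_eq_of_adj_of_degree_eq_one [Fintype α] [DecidableRel G.Adj]
    (hG : G.Preconnected) (hxy : G.Adj x y) (hx : G.degree x = 1) (hy : G.degree y = 1)
    (v : α) : v = x ∨ v = y := by
  have hx_uniq : ∀ w, G.Adj x w → w = y :=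
    fun _ hw => (degree_eq_one_iff_existsUnique_adj.1 hx).unique hw hxy
  have hy_uniq : ∀ w, G.Adj y w → w = x :=
    fun _ hw => (degree_eq_one_iff_existsUnique_adj.1 hy).unique hw hxy.symm
  have hreach := (reachable_iff_reflTransGen x v).1 (hG x v)
  induction hreach with
  | refl => exact Or.inl rfl
  | tail _ huw ih =>
    rcases ih with rfl | rfl
    exacts [Or.inr (hx_uniq _ huw), Or.inl (hy_uniq _ huw)]

end SimpleGraph

lemma IndepSet.card_le_card_of_isClique_cover {ι : Type*} {T : Finset α} {s : Finset ι}
    {P : ι → Finset α} (hT : IndepSet G T) (hP : ∀ i ∈ s, G.IsClique (P i : Set α))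
    (hcover : ∀ v ∈ T, ∃ i ∈ s, v ∈ P i) : T.card ≤ s.card :=
  card_le_card_of_forall_subsingleton (fun v i => v ∈ P i) hcover fun i hi u hu w hw => by
    by_contra hne
    exact hT hu.1 hw.1 (hP i hi hu.2 hw.2 hne)

lemma IndepSet.exists_maxIndepSet_superset [Finite α] {S : Finset α} (hS : IndepSet G S) :
    ∃ T, MaxIndepSet G T ∧ S ⊆ T := by
  obtain ⟨T, hST, hT⟩ := (Set.toFinite {T : Finset α | IndepSet G T}).exists_le_maximal hS
  exact ⟨T, ⟨hT.prop, fun U hU hTU => (hT.eq_of_le hU hTU).symm⟩, hST⟩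

lemma MaxIndepSet.exists_adj_of_notMem [DecidableEq α] {S : Finset α} {y : α}
    (hS : MaxIndepSet G S) (hy : y ∉ S) : ∃ s ∈ S, G.Adj y s := by
  by_contra! h
  refine hy (hS.2 (T := insert y S) ?_ (subset_insert _ _) ▸ mem_insert_self y S)
  intro u hu w hw
  rcases mem_insert.1 hu with rfl | huS <;> rcases mem_insert.1 hw with rfl | hwS
  · exact G.irrefl
  · exact h w hwS
  · exact fun huw => h u huS huw.symm
  · exact hS.1 huS hwS

lemma MaxIndepSet.exists_adj_symmDiff_eq_pair [DecidableEq α] {S T : Finset α}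
    (hS : MaxIndepSet G S) (hT : MaxIndepSet G T) (hcard : S.card = T.card)
    (hinter : (S ∩ T).card + 1 = S.card) : ∃ x y, G.Adj x y ∧ S ∆ T = {x, y} := by
  obtain ⟨x, hx⟩ : ∃ x, S \ T = {x} := card_eq_one.1 <| by
    have := card_inter_add_card_sdiff S T
    omega
  obtain ⟨y, hy⟩ : ∃ y, T \ S = {y} := card_eq_one.1 <| by
    have := card_inter_add_card_sdiff T S
    rw [inter_comm] at this
    omega
  have hyTS : y ∈ T \ S := hy ▸ mem_singleton_self y
  obtain ⟨s, hsS, hys⟩ := hS.exists_adj_of_notMem (mem_sdiff.1 hyTS).2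
  have hsx : s ∈ S \ T := mem_sdiff.2 ⟨hsS, fun hsT => hT.1 (mem_sdiff.1 hyTS).1 hsT hys⟩
  rw [hx, mem_singleton] at hsx
  refine ⟨x, y, hsx ▸ hys.symm, ?_⟩
  rw [symmDiff_def, sup_eq_union, hx, hy, ← insert_eq]

lemma exists_lt_mem_symmDiff_succ [DecidableEq α] (F : ℕ → Finset α) {v : α} {n : ℕ}
    (h : ¬(v ∈ F 0 ↔ v ∈ F n)) : ∃ i < n, v ∈ F i ∆ F (i + 1) := by
  induction n with
  | zero => exact absurd Iff.rfl h
  | succ n ih =>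
    by_cases hn : v ∈ F n ↔ v ∈ F (n + 1)
    · obtain ⟨i, hi, hv⟩ := ih fun h0 => h (h0.trans hn)
      exact ⟨i, by omega, hv⟩
    · exact ⟨n, by omega, by rw [mem_symmDiff]; tauto⟩

lemma card_filter_eq_of_cover [Fintype α] {ι : Type*} {s : Finset ι} {P : ι → Finset α}
    (p : α → Prop) [DecidablePred p] (hcover : ∀ v, ∃ i ∈ s, v ∈ P i)
    (hp : ∀ i ∈ s, ∀ u ∈ P i, ∀ w ∈ P i, p u → p w → u = w)
    (hnp : ∀ i ∈ s, ∀ u ∈ P i, ∀ w ∈ P i, ¬p u → ¬p w → u = w)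
    (hcard : Fintype.card α = 2 * s.card) : (univ.filter p).card = s.card := by
  have hle : ∀ q : α → Prop, [DecidablePred q] →
      (∀ i ∈ s, ∀ u ∈ P i, ∀ w ∈ P i, q u → q w → u = w) → (univ.filter q).card ≤ s.card :=
    fun q _ hq => card_le_card_of_forall_subsingleton (fun v i => v ∈ P i)
      (fun v _ => hcover v) fun i hi u hu w hw =>
        hq i hi u hu.2 w hw.2 (mem_filter.1 hu.1).2 (mem_filter.1 hw.1).2
  have hsum := card_filter_add_card_filter_not (s := univ) p
  have := hle p hp
  have := hle (fun v => ¬p v) hnp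
  rw [card_univ] at hsum
  omega

variable [Fintype α] [DecidableEq α] [DecidableRel G.Adj]

lemma degree_eq_one_or_of_isClique_cover {ι : Type*} {s : Finset ι} {P : ι → Finset α}
    (hG : G.IsAcyclic) (hP : ∀ i ∈ s, G.IsClique (P i : Set α)) (hcover : ∀ v, ∃ i ∈ s, v ∈ P i)
    (hindep : ∀ T, MaxIndepSet G T → s.card ≤ T.card) {i : ι} (hi : i ∈ s) {x y : α}
    (hxy : G.Adj x y) (hPi : P i ⊆ {x, y}) : G.degree x = 1 ∨ G.degree y = 1 := by
  classical
  by_contra! h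
  obtain ⟨p, hxp, hpy⟩ := G.exists_adj_ne_of_degree_ne_one hxy h.1
  obtain ⟨q, hyq, hqx⟩ := G.exists_adj_ne_of_degree_ne_one hxy.symm h.2
  have hpq : IndepSet G {p, q} := by
    have := hG.not_adj_of_adj_of_adj hxy hxp hyq hpy hqx
    intro u hu w hw
    simp only [mem_insert, mem_singleton] at hu hw
    rcases hu with rfl | rfl <;> rcases hw with rfl | rfl
    exacts [G.irrefl, this, fun h => this h.symm, G.irrefl]
  obtain ⟨T, hT, hpqT⟩ := hpq.exists_maxIndepSet_superset
  have hcoverT : ∀ v ∈ T, ∃ j ∈ s.erase i, v ∈ P j := by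
    intro v hv
    obtain ⟨j, hj, hvj⟩ := hcover v
    refine ⟨j, mem_erase.2 ⟨?_, hj⟩, hvj⟩
    rintro rfl
    rcases mem_insert.1 (hPi hvj) with rfl | hvy
    · exact hT.1 hv (hpqT (mem_insert_self p {q})) hxp
    · exact hT.1 (mem_singleton.1 hvy ▸ hv) (hpqT (by simp)) hyq
  have hle := hT.1.card_le_card_of_isClique_cover (fun j hj => hP j (mem_of_mem_erase hj)) hcoverT
  have := hindep T hT
  rw [card_erase_of_mem hi] at hle
  have := card_pos.2 ⟨i, hi⟩
  omega

lemma card_filter_degree_eq_one_of_edge_cover {ι : Type*} {s : Finset ι} {P : ι → Finset α}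
    (hG : G.IsTree) (hP : ∀ i ∈ s, ∃ x y, G.Adj x y ∧ P i = {x, y})
    (hcover : ∀ v, ∃ i ∈ s, v ∈ P i) (hindep : ∀ T, MaxIndepSet G T → s.card ≤ T.card)
    (hs : 2 ≤ s.card) (hcard : Fintype.card α = 2 * s.card) :
    (univ.filter fun v => G.degree v = 1).card = s.card := by
  have hclique : ∀ i ∈ s, G.IsClique (P i : Set α) := by
    intro i hi
    obtain ⟨x, y, hxy, hPi⟩ := hP i hi
    rw [hPi, coe_pair]
    exact SimpleGraph.isClique_pair.2 fun _ => hxy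
  refine card_filter_eq_of_cover _ hcover (fun i hi => ?_) (fun i hi => ?_) hcard <;>
    obtain ⟨x, y, hxy, hPi⟩ := hP i hi
  · have hnot : ¬(G.degree x = 1 ∧ G.degree y = 1) := by
      rintro ⟨hx, hy⟩
      have hall := hG.connected.preconnected.eq_or_eq_of_adj_of_degree_eq_one hxy hx hy
      have : Fintype.card α ≤ 2 :=
        calc Fintype.card α = (univ : Finset α).card := card_univ.symm
          _ ≤ ({x, y} : Finset α).card := card_le_card fun v _ => by simpa using hall v
          _ ≤ 2 := card_le_two
      omega
    simp only [hPi, mem_insert, mem_singleton]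
    rintro u (rfl | rfl) w (rfl | rfl) hu hw <;> tauto
  · have hone := degree_eq_one_or_of_isClique_cover hG.isAcyclic hclique hcover hindep hi hxy
      hPi.subset
    simp only [hPi, mem_insert, mem_singleton]
    rintro u (rfl | rfl) w (rfl | rfl) hu hw <;> tauto

end

theorem tree_S2_pendant_count_general {α : Type*} [Fintype α] [DecidableEq α]
    (G : SimpleGraph α) [DecidableRel G.Adj] (n : ℕ) (hn : 2 ≤ n)
    (htree : G.IsTree) (hcardα : Fintype.card α = 2 * n)
    (hunmixed : Unmixed G)
    (V W : Finset α) (hbip : IsBipartition G V W)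
    (hV : V.card = n)
    (F : ℕ → Finset α)
    (hF0 : F 0 = V) (hFn : F n = W)
    (hmax : ∀ i ≤ n, MaxIndepSet G (F i))
    (hcard : ∀ i < n, (F i ∩ F (i + 1)).card = n - 1) :
    (Finset.univ.filter (fun v : α => G.degree v = 1)).card = n := by
  have hcardF : ∀ i ≤ n, (F i).card = n := fun i hi => by
    rw [hunmixed (hmax i hi) (hmax 0 (Nat.zero_le n)), hF0, hV]
  have hstep : ∀ i ∈ range n, ∃ x y, G.Adj x y ∧ F i ∆ F (i + 1) = {x, y} := by
    intro i hi
    rw [mem_range] at hi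
    exact (hmax i hi.le).exists_adj_symmDiff_eq_pair (hmax (i + 1) hi)
      (by rw [hcardF i hi.le, hcardF (i + 1) hi]) (by rw [hcard i hi, hcardF i hi.le]; omega)
  have hcover : ∀ v, ∃ i ∈ range n, v ∈ F i ∆ F (i + 1) := by
    intro v
    have hVW : ¬(v ∈ F 0 ↔ v ∈ F n) := by
      have hv : v ∈ V ∨ v ∈ W := by rw [← mem_union, hbip.2.1]; exact mem_univ v
      have hvVW : v ∈ V → v ∉ W := fun h => disjoint_left.1 hbip.1 h
      rw [hF0, hFn]
      tauto
    obtain ⟨i, hi, hv⟩ := exists_lt_mem_symmDiff_succ F hVW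
    exact ⟨i, mem_range.2 hi, hv⟩
  have hindep : ∀ T, MaxIndepSet G T → (range n).card ≤ T.card := fun T hT => by
    rw [hunmixed hT (hmax 0 (Nat.zero_le n)), hF0, hV, card_range]
  simpa using card_filter_degree_eq_one_of_edge_cover htree hstep hcover hindep
    (by rwa [card_range]) (by rwa [card_range])

/-- Remark after Corollary 1.7: a tree on `2n` vertices (`n ≥ 2`) which is unmixed
and has a bipartition `(V, W)` with `|V| = |W| = n` carrying a chain of maximal
independent sets `V = F₀, …, Fₙ = W` with consecutive intersections of cardinality
`n - 1` has precisely `n` vertices of degree one. -/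
theorem tree_S2_pendant_count {α : Type*} [Fintype α] [DecidableEq α]
    (G : SimpleGraph α) [DecidableRel G.Adj] (n : ℕ) (hn : 2 ≤ n)
    (htree : G.IsTree) (hcardα : Fintype.card α = 2 * n)
    (hunmixed : Unmixed G)
    (V W : Finset α) (hbip : IsBipartition G V W)
    (hV : V.card = n) (hW : W.card = n)
    (F : ℕ → Finset α)
    (hF0 : F 0 = V) (hFn : F n = W)
    (hmax : ∀ i ≤ n, MaxIndepSet G (F i))
    (hcard : ∀ i < n, (F i ∩ F (i + 1)).card = n - 1) :
    (Finset.univ.filter (fun v : α => G.degree v = 1)).card = n :=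
  tree_S2_pendant_count_general G n hn htree hcardα hunmixed V W hbip hV F hF0 hFn hmax hcard
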